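/- arXiv:2410.18720 — 7 statements merged into one kernel-verified Lean document; each statement's English description precedes it below -/
import Mathlib

section
/- Let ℒ : ℝ^{n×n} → ℝ be continuously differentiable, and let U, V : ℝ → ℝ^{n×r} and S : ℝ → ℝ^{r×r} be differentiable at a time t at which U(t) and V(t) have orthonormal columns and S(t) is invertible. Write G := ∇ℒ(U(t)S(t)V(t)ᵀ). If the factors satisfy the Riemannian factor equations U′(t) = −(I − U(t)U(t)ᵀ) G V(t) S(t)^{−1}, S′(t) = −U(t)ᵀ G V(t), and V′(t) = −(I − V(t)V(t)ᵀ) Gᵀ U(t) S(t)^{−ᵀ}, then the product W(t) = U(t)S(t)V(t)ᵀ satisfies W′(t) = −P(U(t),V(t)) G, i.e. the factor dynamics realize the projected gradient flow Ẇ = −P(W)∇ℒ(W). -/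
open Matrix

attribute [local instance] Matrix.frobeniusNormedAddCommGroup Matrix.frobeniusNormedSpace

/-- The Frobenius inner product `⟨A,B⟩ = trace (Aᵀ * B)`. -/
noncomputable def frobInner {m k : Type*} [Fintype m] [Fintype k]
    (A B : Matrix m k ℝ) : ℝ := (Aᵀ * B).trace

/-- The continuous linear map `H ↦ ⟨G, H⟩` (Frobenius inner product against `G`),
used to express that `G` is the gradient of a function at a point. -/
noncomputable def frobCLM {m k : Type*} [Fintype m] [Fintype k] (G : Matrix m k ℝ) :
    Matrix m k ℝ →L[ℝ] ℝ :=
  LinearMap.toContinuousLinearMap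
    { toFun := fun H => (Gᵀ * H).trace
      map_add' := fun A B => by simp [Matrix.mul_add]
      map_smul' := fun c A => by simp [Matrix.mul_smul] }

/-- The tangent-space projection `P(U,V)Z = UUᵀZ + ZVVᵀ − UUᵀZVVᵀ`. -/
noncomputable def tanProj {n r : ℕ} (U V : Matrix (Fin n) (Fin r) ℝ)
    (Z : Matrix (Fin n) (Fin n) ℝ) : Matrix (Fin n) (Fin n) ℝ :=
  U * Uᵀ * Z + Z * (V * Vᵀ) - U * Uᵀ * Z * (V * Vᵀ)



/-- Matrix multiplication as a continuous bilinear map (Frobenius norm). -/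
noncomputable def matMulCLM (a b c : ℕ) :
    Matrix (Fin a) (Fin b) ℝ →L[ℝ] Matrix (Fin b) (Fin c) ℝ →L[ℝ] Matrix (Fin a) (Fin c) ℝ :=
  LinearMap.toContinuousLinearMap
    { toFun := fun A => LinearMap.toContinuousLinearMap
        { toFun := fun B => A * B
          map_add' := fun x y => Matrix.mul_add A x y
          map_smul' := fun cc x => Matrix.mul_smul A cc x }
      map_add' := fun x y => by
        ext B
        simp [Matrix.add_mul]
      map_smul' := fun cc x => by
        ext B
        simp [Matrix.smul_mul] }

@[simp] lemma matMulCLM_apply (a b c : ℕ) (A : Matrix (Fin a) (Fin b) ℝ)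
    (B : Matrix (Fin b) (Fin c) ℝ) : matMulCLM a b c A B = A * B := rfl

theorem HasDerivAt.matMul {a b c : ℕ} {f : ℝ → Matrix (Fin a) (Fin b) ℝ}
    {g : ℝ → Matrix (Fin b) (Fin c) ℝ} {f' : Matrix (Fin a) (Fin b) ℝ}
    {g' : Matrix (Fin b) (Fin c) ℝ} {t : ℝ}
    (hf : HasDerivAt f f' t) (hg : HasDerivAt g g' t) :
    HasDerivAt (fun s => f s * g s) (f' * g t + f t * g') t := by
  have hB := ((matMulCLM a b c).isBoundedBilinearMap).hasFDerivAt (f t, g t)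
  have h := hB.comp_hasDerivAt t (hf.prodMk hg)
  have : ((matMulCLM a b c).isBoundedBilinearMap.deriv (f t, g t)) (f', g') =
      f' * g t + f t * g' := by
    rw [IsBoundedBilinearMap.deriv_apply]
    exact add_comm (f t * g') (f' * g t)
  rw [this] at h
  exact h

noncomputable def transposeCLM (a b : ℕ) :
    Matrix (Fin a) (Fin b) ℝ →L[ℝ] Matrix (Fin b) (Fin a) ℝ :=
  LinearMap.toContinuousLinearMap
    { toFun := fun A => Aᵀ
      map_add' := fun x y => Matrix.transpose_add x y
      map_smul' := fun cc x => Matrix.transpose_smul cc x }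

theorem HasDerivAt.matTranspose {a b : ℕ} {f : ℝ → Matrix (Fin a) (Fin b) ℝ}
    {f' : Matrix (Fin a) (Fin b) ℝ} {t : ℝ} (hf : HasDerivAt f f' t) :
    HasDerivAt (fun s => (f s)ᵀ) f'ᵀ t := by
  exact (transposeCLM a b).hasFDerivAt.comp_hasDerivAt t hf

/-- If the factors `U, S, V` satisfy the Riemannian factor ODEs
`U′ = −(I − UUᵀ) G V S⁻¹`, `S′ = −Uᵀ G V`, `V′ = −(I − VVᵀ) Gᵀ U S⁻ᵀ` at time `t`
(with `U(t), V(t)` orthonormal, `S(t)` invertible, `G = ∇ℒ(U(t)S(t)V(t)ᵀ)`), then the product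
`W(t) = U(t)S(t)V(t)ᵀ` satisfies `W′(t) = −P(U(t),V(t)) G`, i.e. the factor dynamics realize
the projected gradient flow `Ẇ = −P(W)∇ℒ(W)`. -/
theorem factor_dynamics_realize_projected_gradient_flow (n r : ℕ)
    (L : Matrix (Fin n) (Fin n) ℝ → ℝ) (hL : ContDiff ℝ 1 L)
    (U V : ℝ → Matrix (Fin n) (Fin r) ℝ) (S : ℝ → Matrix (Fin r) (Fin r) ℝ)
    (U' V' : Matrix (Fin n) (Fin r) ℝ) (S' : Matrix (Fin r) (Fin r) ℝ) (t : ℝ)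
    (hUd : HasDerivAt U U' t) (hSd : HasDerivAt S S' t) (hVd : HasDerivAt V V' t)
    (hU : (U t)ᵀ * U t = 1) (hV : (V t)ᵀ * V t = 1) (hS : IsUnit (S t))
    (G : Matrix (Fin n) (Fin n) ℝ)
    (hG : HasFDerivAt L (frobCLM G) (U t * S t * (V t)ᵀ))
    (hU' : U' = -((1 - U t * (U t)ᵀ) * G * V t * (S t)⁻¹))
    (hS' : S' = -((U t)ᵀ * G * V t))
    (hV' : V' = -((1 - V t * (V t)ᵀ) * Gᵀ * U t * ((S t)⁻¹)ᵀ)) :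
    HasDerivAt (fun s : ℝ => U s * S s * (V s)ᵀ) (-(tanProj (U t) (V t) G)) t := by
  have hdet : IsUnit (S t).det := (Matrix.isUnit_iff_isUnit_det _).mp hS
  have hSi : (S t)⁻¹ * S t = 1 := Matrix.nonsing_inv_mul _ hdet
  have hSi' : S t * (S t)⁻¹ = 1 := Matrix.mul_nonsing_inv _ hdet
  have h := (hUd.matMul hSd).matMul hVd.matTranspose
  have h2 : ∀ (X : Matrix (Fin r) (Fin n) ℝ), (S t)⁻¹ * (S t * X) = X := fun X => by
    rw [← Matrix.mul_assoc, hSi, Matrix.one_mul]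
  have h3 : ∀ (X : Matrix (Fin r) (Fin n) ℝ), S t * ((S t)⁻¹ * X) = X := fun X => by
    rw [← Matrix.mul_assoc, hSi', Matrix.one_mul]
  have key : (U' * S t + U t * S') * (V t)ᵀ + U t * S t * V'ᵀ
      = -(tanProj (U t) (V t) G) := by
    subst hU' hS' hV'
    simp only [tanProj, Matrix.transpose_neg, Matrix.transpose_mul, Matrix.transpose_sub,
      Matrix.transpose_one, Matrix.transpose_transpose, Matrix.transpose_nonsing_inv,
      Matrix.neg_mul, Matrix.mul_neg, Matrix.sub_mul, Matrix.mul_sub, Matrix.one_mul,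
      Matrix.mul_one, Matrix.add_mul, Matrix.mul_assoc, h2, h3]
    abel
  rw [key] at h
  exact h
end

section
/- Let U₀, V₀ ∈ ℝ^{n×r} have orthonormal columns, let S₀ ∈ ℝ^{r×r}, W₀ := U₀S₀V₀ᵀ, let f ∈ ℝ^{n×n} and λ ∈ ℝ, and define the updates K := U₀S₀ + λ f V₀, L := V₀S₀ᵀ + λ fᵀ U₀, and S_new := S₀ + λ U₀ᵀ f V₀. Let Ũ, Ṽ ∈ ℝ^{n×r'} satisfy Ũᵀ Ũ = I, Ṽᵀ Ṽ = I, Ũᵀ U₀ = 0, Ṽᵀ V₀ = 0, together with the augmentation conditions (I − U₀U₀ᵀ − ŨŨᵀ) f V₀ = 0 and (I − V₀V₀ᵀ − ṼṼᵀ) fᵀ U₀ = 0 (i.e. the augmented bases capture the ranges of K and L). Then the augmented low-rank iterate satisfies U₀ S_new V₀ᵀ + Ũ Ũᵀ K V₀ᵀ + U₀ Lᵀ Ṽ Ṽᵀ = W₀ + λ (U₀U₀ᵀ f + f V₀V₀ᵀ − U₀U₀ᵀ f V₀V₀ᵀ) = W₀ + λ P(U₀,V₀) f; that is, one GeoLoRA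 basis-augmentation and coefficient-assembly step equals an explicit projected-gradient step. -/
open Matrix

attribute [local instance] Matrix.frobeniusNormedAddCommGroup Matrix.frobeniusNormedSpace

/-!
The orthogonality `Ũᵀ U₀ = 0` kills the `S₀`-part of `K`, and the augmentation condition says that
`Ũ Ũᵀ` acts as `I − U₀ U₀ᵀ` on `f V₀`; hence `Ũ Ũᵀ K V₀ᵀ = λ (I − U₀ U₀ᵀ) f V₀ V₀ᵀ`. Transposing the
same computation gives `U₀ Lᵀ Ṽ Ṽᵀ = λ U₀ U₀ᵀ f (I − V₀ V₀ᵀ)`, and adding `U₀ S_new V₀ᵀ` assembles the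
three blocks of `P(U₀,V₀) f`.
-/

section Augmentation

variable {R m n k l p : Type*} [CommRing R] [Fintype m] [Fintype n] [Fintype k] [Fintype l]
  [Fintype p]

theorem augment_proj_K [DecidableEq m] (U₀ : Matrix m k R) (Ua : Matrix m l R)
    (S₀ : Matrix k p R) (V₀ : Matrix n p R) (f : Matrix m n R) (lam : R)
    (hUaU₀ : Uaᵀ * U₀ = 0) (haug : (1 - U₀ * U₀ᵀ - Ua * Uaᵀ) * (f * V₀) = 0) :
    Ua * Uaᵀ * (U₀ * S₀ + lam • (f * V₀)) * V₀ᵀ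
      = lam • ((1 - U₀ * U₀ᵀ) * f * (V₀ * V₀ᵀ)) := by
  have hS₀ : Ua * Uaᵀ * (U₀ * S₀) = 0 := by
    rw [Matrix.mul_assoc, ← Matrix.mul_assoc Uaᵀ, hUaU₀, Matrix.zero_mul, Matrix.mul_zero]
  have hf : Ua * Uaᵀ * (f * V₀) = (1 - U₀ * U₀ᵀ) * (f * V₀) := by
    rwa [Matrix.sub_mul _ (Ua * Uaᵀ), sub_eq_zero, eq_comm] at haug
  rw [Matrix.mul_add, hS₀, zero_add, Matrix.mul_smul, hf, Matrix.smul_mul]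
  simp only [Matrix.mul_assoc]

theorem augment_proj_L [DecidableEq n] (U₀ : Matrix m k R) (V₀ : Matrix n p R)
    (Va : Matrix n l R) (S₀ : Matrix k p R) (f : Matrix m n R) (lam : R)
    (hVaV₀ : Vaᵀ * V₀ = 0) (haug : (1 - V₀ * V₀ᵀ - Va * Vaᵀ) * (fᵀ * U₀) = 0) :
    U₀ * (V₀ * S₀ᵀ + lam • (fᵀ * U₀))ᵀ * (Va * Vaᵀ)
      = lam • (U₀ * U₀ᵀ * f * (1 - V₀ * V₀ᵀ)) := by
  have h := congrArg transpose (augment_proj_K V₀ Va S₀ᵀ U₀ fᵀ lam hVaV₀ haug)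
  simpa only [transpose_mul, transpose_smul, transpose_transpose, transpose_sub, transpose_one,
    Matrix.mul_assoc] using h

end Augmentation

theorem geolora_step_is_projected_gradient_step_general (n r r' : ℕ)
    (U₀ V₀ : Matrix (Fin n) (Fin r) ℝ) (S₀ : Matrix (Fin r) (Fin r) ℝ)
    (f : Matrix (Fin n) (Fin n) ℝ) (lam : ℝ)
    (Ua Va : Matrix (Fin n) (Fin r') ℝ)
    (hUaU₀ : Uaᵀ * U₀ = 0) (hVaV₀ : Vaᵀ * V₀ = 0)
    (haugU : (1 - U₀ * U₀ᵀ - Ua * Uaᵀ) * (f * V₀) = 0)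
    (haugV : (1 - V₀ * V₀ᵀ - Va * Vaᵀ) * (fᵀ * U₀) = 0) :
    U₀ * (S₀ + lam • (U₀ᵀ * f * V₀)) * V₀ᵀ
        + Ua * Uaᵀ * (U₀ * S₀ + lam • (f * V₀)) * V₀ᵀ
        + U₀ * (V₀ * S₀ᵀ + lam • (fᵀ * U₀))ᵀ * (Va * Vaᵀ)
      = U₀ * S₀ * V₀ᵀ
        + lam • (U₀ * U₀ᵀ * f + f * (V₀ * V₀ᵀ) - U₀ * U₀ᵀ * f * (V₀ * V₀ᵀ)) ∧
    U₀ * S₀ * V₀ᵀ + lam • (U₀ * U₀ᵀ * f + f * (V₀ * V₀ᵀ) - U₀ * U₀ᵀ * f * (V₀ * V₀ᵀ))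
      = U₀ * S₀ * V₀ᵀ + lam • tanProj U₀ V₀ f := by
  refine ⟨?_, rfl⟩
  rw [augment_proj_K U₀ Ua S₀ V₀ f lam hUaU₀ haugU, augment_proj_L U₀ V₀ Va S₀ f lam hVaV₀ haugV]
  simp only [Matrix.mul_add, Matrix.add_mul, Matrix.sub_mul, Matrix.mul_sub, Matrix.one_mul,
    Matrix.mul_one, Matrix.mul_smul, Matrix.smul_mul, Matrix.mul_assoc]
  module

/-- One GeoLoRA basis-augmentation and coefficient-assembly step equals an explicit
projected-gradient step: with `K = U₀S₀ + λ f V₀`, `L = V₀S₀ᵀ + λ fᵀ U₀`,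
`S_new = S₀ + λ U₀ᵀ f V₀`, and augmentations `Ũ, Ṽ` orthonormal, orthogonal to `U₀, V₀`, and
capturing the ranges of `K` and `L`, one has
`U₀ S_new V₀ᵀ + Ũ Ũᵀ K V₀ᵀ + U₀ Lᵀ Ṽ Ṽᵀ = W₀ + λ (U₀U₀ᵀ f + f V₀V₀ᵀ − U₀U₀ᵀ f V₀V₀ᵀ)
 = W₀ + λ P(U₀,V₀) f`. -/
theorem geolora_step_is_projected_gradient_step (n r r' : ℕ)
    (U₀ V₀ : Matrix (Fin n) (Fin r) ℝ) (S₀ : Matrix (Fin r) (Fin r) ℝ)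
    (hU₀ : U₀ᵀ * U₀ = 1) (hV₀ : V₀ᵀ * V₀ = 1)
    (f : Matrix (Fin n) (Fin n) ℝ) (lam : ℝ)
    (Ua Va : Matrix (Fin n) (Fin r') ℝ)
    (hUa : Uaᵀ * Ua = 1) (hVa : Vaᵀ * Va = 1)
    (hUaU₀ : Uaᵀ * U₀ = 0) (hVaV₀ : Vaᵀ * V₀ = 0)
    (haugU : (1 - U₀ * U₀ᵀ - Ua * Uaᵀ) * (f * V₀) = 0)
    (haugV : (1 - V₀ * V₀ᵀ - Va * Vaᵀ) * (fᵀ * U₀) = 0) :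
    U₀ * (S₀ + lam • (U₀ᵀ * f * V₀)) * V₀ᵀ
        + Ua * Uaᵀ * (U₀ * S₀ + lam • (f * V₀)) * V₀ᵀ
        + U₀ * (V₀ * S₀ᵀ + lam • (fᵀ * U₀))ᵀ * (Va * Vaᵀ)
      = U₀ * S₀ * V₀ᵀ
        + lam • (U₀ * U₀ᵀ * f + f * (V₀ * V₀ᵀ) - U₀ * U₀ᵀ * f * (V₀ * V₀ᵀ)) ∧
    U₀ * S₀ * V₀ᵀ + lam • (U₀ * U₀ᵀ * f + f * (V₀ * V₀ᵀ) - U₀ * U₀ᵀ * f * (V₀ * V₀ᵀ))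
      = U₀ * S₀ * V₀ᵀ + lam • tanProj U₀ V₀ f :=
  geolora_step_is_projected_gradient_step_general n r r' U₀ V₀ S₀ f lam Ua Va hUaU₀ hVaV₀ haugU
    haugV
end

section
/- (Deterministic form of the descent estimate, Theorem 1.) Let ℒ : ℝ^{n×n} → ℝ be differentiable with ∇ℒ Lipschitz continuous with constant Lip with respect to the Frobenius norm, and assume ‖∇ℒ(Z)‖ ≤ B for all Z ∈ ℝ^{n×n}. Let U₀, V₀ ∈ ℝ^{n×r} have orthonormal columns, S₀ ∈ ℝ^{r×r}, W₀ := U₀S₀V₀ᵀ, f := −∇ℒ(W₀), λ > 0, and let Ŵ := W₀ + λ P(U₀,V₀) f be the augmented iterate. Then for every matrix W₁ ∈ ℝ^{n×n} (the iterate after rank truncation), ℒ(W₁) ≤ ℒ(W₀) − λ (1 − Lip·λ/2) ‖P(U₀,V₀) f‖² + B ‖W₁ − Ŵ‖. -/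
open Matrix

attribute [local instance] Matrix.frobeniusNormedAddCommGroup Matrix.frobeniusNormedSpace

section AuxInner

variable {m k : Type*} [Fintype m] [Fintype k]

lemma frobCLM_apply (G H : Matrix m k ℝ) : frobCLM G H = frobInner G H := rfl

lemma frobInner_eq_sum (A B : Matrix m k ℝ) :
    frobInner A B = ∑ i, ∑ j, A i j * B i j := by
  rw [frobInner, Matrix.trace]
  simp only [Matrix.diag_apply, Matrix.mul_apply, Matrix.transpose_apply]
  exact Finset.sum_comm

lemma frob_norm_eq_sqrt (A : Matrix m k ℝ) :
    ‖A‖ = Real.sqrt (∑ i, ∑ j, A i j ^ 2) := by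
  rw [Matrix.frobenius_norm_def, Real.sqrt_eq_rpow]
  congr 1
  refine Finset.sum_congr rfl fun i _ => Finset.sum_congr rfl fun j _ => ?_
  rw [Real.rpow_two, Real.norm_eq_abs, sq_abs]

lemma frobInner_self (A : Matrix m k ℝ) : frobInner A A = ‖A‖ ^ 2 := by
  rw [frobInner_eq_sum, frob_norm_eq_sqrt, Real.sq_sqrt (by positivity)]
  simp [sq]

lemma frobInner_le (A B : Matrix m k ℝ) : frobInner A B ≤ ‖A‖ * ‖B‖ := by
  rw [frobInner_eq_sum, frob_norm_eq_sqrt A, frob_norm_eq_sqrt B]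
  have h := Real.sum_mul_le_sqrt_mul_sqrt (Finset.univ : Finset (m × k))
      (fun p => A p.1 p.2) (fun p => B p.1 p.2)
  simpa [Fintype.sum_prod_type] using h

lemma frobInner_neg_left (A B : Matrix m k ℝ) : frobInner (-A) B = - frobInner A B := by
  simp [frobInner]

lemma frobInner_sub_left (A B C : Matrix m k ℝ) :
    frobInner (A - B) C = frobInner A C - frobInner B C := by
  simp [frobInner, Matrix.transpose_sub, Matrix.sub_mul]

lemma frobInner_smul_right (c : ℝ) (A B : Matrix m k ℝ) :
    frobInner A (c • B) = c * frobInner A B := by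
  simp [frobInner, Matrix.mul_smul]

lemma abs_frobInner_le (A B : Matrix m k ℝ) : |frobInner A B| ≤ ‖A‖ * ‖B‖ := by
  rcases abs_cases (frobInner A B) with ⟨h, _⟩ | ⟨h, _⟩ <;> rw [h]
  · exact frobInner_le A B
  · have h2 := frobInner_le (-A) B
    rw [frobInner_neg_left, norm_neg] at h2
    linarith

lemma norm_frobCLM_le (G : Matrix m k ℝ) : @Norm.norm (Matrix m k ℝ →L[ℝ] ℝ)
    (@ContinuousLinearMap.hasOpNorm ℝ ℝ (Matrix m k ℝ) ℝ _ _ _ _ _ _ (RingHom.id ℝ))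
    (frobCLM G) ≤ ‖G‖ :=
  ContinuousLinearMap.opNorm_le_bound _ (norm_nonneg G) fun H => by
    show |frobInner G H| ≤ ‖G‖ * ‖H‖
    exact abs_frobInner_le G H

end AuxInner

/-- Idempotency in a general ring. -/
lemma ring_proj_idem {R : Type*} [Ring R] (p q z : R) (hp : p * p = p) (hq : q * q = q) :
    p * (p*z + z*q - p*z*q) + (p*z + z*q - p*z*q) * q - p * (p*z + z*q - p*z*q) * q
      = p*z + z*q - p*z*q := by
  have hp' : ∀ x : R, p * (p * x) = p * x := fun x => by rw [← mul_assoc, hp]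
  simp only [mul_add, add_mul, mul_sub, sub_mul, mul_assoc, hq, hp']
  abel

section AuxProj

variable {n r : ℕ}

lemma tanProj_idem (U V : Matrix (Fin n) (Fin r) ℝ)
    (hU : Uᵀ * U = 1) (hV : Vᵀ * V = 1) (Z : Matrix (Fin n) (Fin n) ℝ) :
    tanProj U V (tanProj U V Z) = tanProj U V Z := by
  have hp : (U * Uᵀ) * (U * Uᵀ) = U * Uᵀ := by
    rw [Matrix.mul_assoc, ← Matrix.mul_assoc Uᵀ U Uᵀ, hU, Matrix.one_mul]
  have hq : (V * Vᵀ) * (V * Vᵀ) = V * Vᵀ := by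
    rw [Matrix.mul_assoc, ← Matrix.mul_assoc Vᵀ V Vᵀ, hV, Matrix.one_mul]
  have := ring_proj_idem (U * Uᵀ) (V * Vᵀ) Z hp hq
  simpa [tanProj] using this

lemma trace_adj_aux {N : Type*} [Fintype N] (p q A B : Matrix N N ℝ)
    (hpt : pᵀ = p) (hqt : qᵀ = q) :
    (Aᵀ * (p*B + B*q - p*B*q)).trace = ((p*A + A*q - p*A*q)ᵀ * B).trace := by
  simp only [Matrix.transpose_add, Matrix.transpose_sub, Matrix.transpose_mul, hpt, hqt,
    Matrix.mul_add, Matrix.add_mul, Matrix.mul_sub, Matrix.sub_mul, Matrix.trace_add,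
    Matrix.trace_sub, Matrix.mul_assoc]
  rw [Matrix.trace_mul_comm q (Aᵀ * B), Matrix.trace_mul_comm q (Aᵀ * (p * B))]
  simp only [Matrix.mul_assoc]

/-- Self-adjointness of the tangent projection for the Frobenius inner product. -/
lemma frobInner_tanProj_adj (U V : Matrix (Fin n) (Fin r) ℝ)
    (A B : Matrix (Fin n) (Fin n) ℝ) :
    frobInner A (tanProj U V B) = frobInner (tanProj U V A) B := by
  have hpt : (U * Uᵀ)ᵀ = U * Uᵀ := by simp [Matrix.transpose_mul]
  have hqt : (V * Vᵀ)ᵀ = V * Vᵀ := by simp [Matrix.transpose_mul]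
  have key := trace_adj_aux (U * Uᵀ) (V * Vᵀ) A B hpt hqt
  simpa [frobInner, tanProj, Matrix.mul_assoc] using key

lemma frobInner_tanProj_self (U V : Matrix (Fin n) (Fin r) ℝ)
    (hU : Uᵀ * U = 1) (hV : Vᵀ * V = 1) (A : Matrix (Fin n) (Fin n) ℝ) :
    frobInner A (tanProj U V A) = ‖tanProj U V A‖ ^ 2 := by
  conv_lhs => rw [← tanProj_idem U V hU hV A]
  rw [frobInner_tanProj_adj, frobInner_self]

end AuxProj

/-- The gradient-descent one-step estimate for a Lipschitz gradient. -/
lemma descent_step (n : ℕ) (L : Matrix (Fin n) (Fin n) ℝ → ℝ)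
    (grad : Matrix (Fin n) (Fin n) ℝ → Matrix (Fin n) (Fin n) ℝ)
    (hgrad : ∀ W : Matrix (Fin n) (Fin n) ℝ, HasFDerivAt L (frobCLM (grad W)) W)
    (Lip : NNReal) (hLip : LipschitzWith Lip grad)
    (W D : Matrix (Fin n) (Fin n) ℝ) :
    L (W + D) ≤ L W + frobInner (grad W) D + (Lip : ℝ) / 2 * ‖D‖ ^ 2 := by
  set C : ℝ := (Lip : ℝ) * ‖D‖ ^ 2 with hC
  set φ : ℝ → ℝ := fun t => L (W + t • D) with hφdef
  have hφ : ∀ t : ℝ, HasDerivAt φ (frobInner (grad (W + t • D)) D) t := by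
    intro t
    have h1 : HasDerivAt (fun t : ℝ => W + t • D) D t := by
      exact (((hasDerivAt_id t).smul_const D).const_add W).congr_deriv (one_smul ℝ D)
    have := (hgrad (W + t • D)).comp_hasDerivAt t h1
    exact this
  set ψ : ℝ → ℝ := fun t => φ t - t * frobInner (grad W) D - C / 2 * t ^ 2 with hψdef
  have hψ : ∀ t : ℝ, HasDerivAt ψ
      (frobInner (grad (W + t • D)) D - frobInner (grad W) D - C * t) t := by
    intro t
    have h2 : HasDerivAt (fun t : ℝ => t * frobInner (grad W) D)
        (frobInner (grad W) D) t := by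
      simpa using (hasDerivAt_id t).mul_const (frobInner (grad W) D)
    have h3 : HasDerivAt (fun t : ℝ => C / 2 * t ^ 2) (C * t) t := by
      have := (hasDerivAt_pow 2 t).const_mul (C / 2)
      exact this.congr_deriv (by rw [show (2:ℕ) - 1 = 1 from rfl]; push_cast; ring)
    exact ((hφ t).sub h2).sub h3
  have hψderiv : ∀ t : ℝ, deriv ψ t
      = frobInner (grad (W + t • D)) D - frobInner (grad W) D - C * t :=
    fun t => (hψ t).deriv
  have hmono : AntitoneOn ψ (Set.Icc (0:ℝ) 1) := by
    apply antitoneOn_of_deriv_nonpos (convex_Icc 0 1)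
    · exact fun t _ => ((hψ t).continuousAt).continuousWithinAt
    · exact fun t _ => ((hψ t).differentiableAt).differentiableWithinAt
    · intro t ht
      rw [interior_Icc] at ht
      rw [hψderiv]
      have hsub : frobInner (grad (W + t • D)) D - frobInner (grad W) D
          = frobInner (grad (W + t • D) - grad W) D := (frobInner_sub_left _ _ _).symm
      rw [hsub]
      have h4 : frobInner (grad (W + t • D) - grad W) D
          ≤ ‖grad (W + t • D) - grad W‖ * ‖D‖ := frobInner_le _ _
      have h5 : ‖grad (W + t • D) - grad W‖ ≤ (Lip : ℝ) * (t * ‖D‖) := by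
        have := hLip.dist_le_mul (W + t • D) W
        rw [dist_eq_norm, dist_eq_norm] at this
        have heq : W + t • D - W = t • D := by abel
        rw [heq] at this
        rw [norm_smul, Real.norm_eq_abs, abs_of_pos ht.1] at this
        exact this
      have hDnn : (0:ℝ) ≤ ‖D‖ := norm_nonneg _
      nlinarith [h4, h5, hDnn, ht.1.le]
  have h01 : ψ 1 ≤ ψ 0 :=
    hmono (Set.mem_Icc.mpr ⟨le_refl 0, zero_le_one⟩)
      (Set.mem_Icc.mpr ⟨zero_le_one, le_refl 1⟩) zero_le_one
  have hψ1 : ψ 1 = L (W + D) - frobInner (grad W) D - C / 2 := by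
    simp [hψdef, hφdef]
  have hψ0 : ψ 0 = L W := by simp [hψdef, hφdef]
  rw [hψ1, hψ0] at h01
  rw [hC] at h01
  linarith

/-- deterministic descent estimate, Theorem 1: if `∇ℒ` is `Lip`-Lipschitz and
bounded by `B`, `W₀ = U₀S₀V₀ᵀ` with `U₀, V₀` orthonormal, `f = −∇ℒ(W₀)`, `λ > 0`, and
`Ŵ = W₀ + λ P(U₀,V₀) f`, then for every truncated iterate `W₁`,
`ℒ(W₁) ≤ ℒ(W₀) − λ(1 − Lip·λ/2)‖P(U₀,V₀) f‖² + B‖W₁ − Ŵ‖`. -/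
theorem geolora_descent_estimate (n r : ℕ)
    (L : Matrix (Fin n) (Fin n) ℝ → ℝ)
    (grad : Matrix (Fin n) (Fin n) ℝ → Matrix (Fin n) (Fin n) ℝ)
    (hgrad : ∀ W : Matrix (Fin n) (Fin n) ℝ, HasFDerivAt L (frobCLM (grad W)) W)
    (Lip : NNReal) (hLip : LipschitzWith Lip grad)
    (B : ℝ) (hB : ∀ Z : Matrix (Fin n) (Fin n) ℝ, ‖grad Z‖ ≤ B)
    (U₀ V₀ : Matrix (Fin n) (Fin r) ℝ) (S₀ : Matrix (Fin r) (Fin r) ℝ)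
    (hU₀ : U₀ᵀ * U₀ = 1) (hV₀ : V₀ᵀ * V₀ = 1)
    (lam : ℝ) (hlam : 0 < lam)
    (W₁ : Matrix (Fin n) (Fin n) ℝ) :
    L W₁ ≤ L (U₀ * S₀ * V₀ᵀ)
        - lam * (1 - (Lip : ℝ) * lam / 2)
            * ‖tanProj U₀ V₀ (-grad (U₀ * S₀ * V₀ᵀ))‖ ^ 2
        + B * ‖W₁ - (U₀ * S₀ * V₀ᵀ + lam • tanProj U₀ V₀ (-grad (U₀ * S₀ * V₀ᵀ)))‖ := by
  set W₀ : Matrix (Fin n) (Fin n) ℝ := U₀ * S₀ * V₀ᵀ with hW₀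
  set g : Matrix (Fin n) (Fin n) ℝ := grad W₀ with hg
  set Pf : Matrix (Fin n) (Fin n) ℝ := tanProj U₀ V₀ (-g) with hPf
  set D : Matrix (Fin n) (Fin n) ℝ := lam • Pf with hD
  -- descent step
  have h1 : L (W₀ + D) ≤ L W₀ + frobInner g D + (Lip : ℝ) / 2 * ‖D‖ ^ 2 :=
    descent_step n L grad hgrad Lip hLip W₀ D
  -- compute the inner product
  have hinner : frobInner g D = - (lam * ‖Pf‖ ^ 2) := by
    rw [hD, frobInner_smul_right]
    have : frobInner g Pf = - ‖Pf‖ ^ 2 := by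
      have hkey : frobInner (-g) (tanProj U₀ V₀ (-g)) = ‖tanProj U₀ V₀ (-g)‖ ^ 2 :=
        frobInner_tanProj_self U₀ V₀ hU₀ hV₀ (-g)
      rw [frobInner_neg_left] at hkey
      rw [hPf]
      linarith
    rw [this]
    ring
  -- compute the norm
  have hnorm : ‖D‖ ^ 2 = lam ^ 2 * ‖Pf‖ ^ 2 := by
    rw [hD, norm_smul, Real.norm_eq_abs, abs_of_pos hlam, mul_pow]
  -- mean value bound
  have h2 : L W₁ - L (W₀ + D) ≤ B * ‖W₁ - (W₀ + D)‖ := by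
    have hbound : ∀ x ∈ (Set.univ : Set (Matrix (Fin n) (Fin n) ℝ)),
        @Norm.norm (Matrix (Fin n) (Fin n) ℝ →L[ℝ] ℝ)
          (@ContinuousLinearMap.hasOpNorm ℝ ℝ (Matrix (Fin n) (Fin n) ℝ) ℝ _ _ _ _ _ _ (RingHom.id ℝ))
          (frobCLM (grad x)) ≤ B := fun x _ => (norm_frobCLM_le _).trans (hB x)
    have hder : ∀ x ∈ (Set.univ : Set (Matrix (Fin n) (Fin n) ℝ)),
        HasFDerivWithinAt L (frobCLM (grad x)) Set.univ x :=
      fun x _ => (hgrad x).hasFDerivWithinAt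
    have := (convex_univ (𝕜 := ℝ)
        (E := Matrix (Fin n) (Fin n) ℝ)).norm_image_sub_le_of_norm_hasFDerivWithin_le
        hder hbound (Set.mem_univ (W₀ + D)) (Set.mem_univ W₁)
    calc L W₁ - L (W₀ + D) ≤ |L W₁ - L (W₀ + D)| := le_abs_self _
      _ ≤ B * ‖W₁ - (W₀ + D)‖ := by rw [← Real.norm_eq_abs]; exact this
  have h3 : L W₁ ≤ L W₀ + frobInner g D + (Lip : ℝ) / 2 * ‖D‖ ^ 2 + B * ‖W₁ - (W₀ + D)‖ := by
    linarith
  rw [hinner, hnorm] at h3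
  have : L W₀ + -(lam * ‖Pf‖ ^ 2) + (Lip : ℝ) / 2 * (lam ^ 2 * ‖Pf‖ ^ 2)
      = L W₀ - lam * (1 - (Lip : ℝ) * lam / 2) * ‖Pf‖ ^ 2 := by ring
  rw [this] at h3
  exact h3
end

section
/- (Abstract form of the convergence theorem, Theorem 2.) Let L > 0 and let (ℓ_t)_{t≥0}, (a_t)_{t≥0}, (d_t)_{t≥0}, (λ_t)_{t≥0} be sequences of nonnegative real numbers with λ_t > 0 and λ_t ≤ 2/L for all t, satisfying the per-step descent inequality ℓ_{t+1} ≤ ℓ_t − λ_t (1 − L·λ_t/2) a_t + L d_t for all t. Assume the Robbins–Monro conditions Σ_t λ_t = +∞ and Σ_t λ_t² < +∞, and assume Σ_t d_t ≤ D < ∞. Then liminf_{t→∞} a_t = 0. (Applied with ℓ_t = E[ℒ(W_t^r)], a_t = E[‖P(W_t^r) f(W_t^r)‖²] and d_t = E[‖W_{t+1}^r − Ŵ_t^r‖], this yields liminf_{t→∞} E[‖P(W_t^r) f(W_t^r)‖²] = 0 for the GeoLoRA iterates.) -/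
open Matrix

attribute [local instance] Matrix.frobeniusNormedAddCommGroup Matrix.frobeniusNormedSpace

/-- abstract form of the convergence theorem, Theorem 2: nonnegative sequences
satisfying the per-step descent inequality `ℓ_{t+1} ≤ ℓ_t − λ_t(1 − Lλ_t/2)a_t + L d_t`, with
step sizes `0 < λ_t ≤ 2/L` satisfying the Robbins–Monro conditions and summable truncation
errors `Σ d_t ≤ D`, have `liminf a_t = 0`. -/
theorem geolora_convergence (L : ℝ) (hL : 0 < L)
    (ell a d lam : ℕ → ℝ)
    (hell : ∀ t, 0 ≤ ell t) (ha : ∀ t, 0 ≤ a t) (hd : ∀ t, 0 ≤ d t)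
    (hlam_pos : ∀ t, 0 < lam t) (hlam_le : ∀ t, lam t ≤ 2 / L)
    (hdesc : ∀ t, ell (t + 1) ≤ ell t - lam t * (1 - L * lam t / 2) * a t + L * d t)
    (hRM1 : Filter.Tendsto (fun N => ∑ t ∈ Finset.range N, lam t) Filter.atTop Filter.atTop)
    (hRM2 : Summable fun t => lam t ^ 2)
    (D : ℝ) (hD : ∀ N, ∑ t ∈ Finset.range N, d t ≤ D) :
    Filter.liminf a Filter.atTop = 0 := by
  have hD0 : 0 ≤ D := le_trans (by simp) (hD 0)
  -- lam → 0
  have hlam0 : Filter.Tendsto (fun t => lam t ^ 2) Filter.atTop (nhds 0) :=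
    hRM2.tendsto_atTop_zero
  have hsmall : ∀ᶠ t in Filter.atTop, lam t ≤ 1 / L := by
    have h2 : ∀ᶠ t in Filter.atTop, lam t ^ 2 < (1 / L) ^ 2 := by
      have := hlam0.eventually (eventually_lt_nhds (by positivity : (0:ℝ) < (1/L)^2))
      exact this
    filter_upwards [h2] with t ht
    exact le_of_lt (lt_of_pow_lt_pow_left₀ 2 (by positivity) ht)
  -- key: frequently a t < ε
  have key : ∀ ε > (0:ℝ), ∃ᶠ t in Filter.atTop, a t < ε := by
    intro ε hε
    by_contra hcon
    rw [Filter.not_frequently] at hcon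
    have hcon' : ∀ᶠ t in Filter.atTop, ε ≤ a t := by
      filter_upwards [hcon] with t ht; exact not_lt.mp ht
    obtain ⟨T, hT⟩ := (hcon'.and hsmall).exists_forall_of_atTop
    -- for t ≥ T, lam t * (1 - L * lam t / 2) * a t ≥ (ε/2) * lam t
    have hc : ∀ t ≥ T, ε / 2 * lam t ≤ lam t * (1 - L * lam t / 2) * a t := by
      intro t ht
      obtain ⟨h1, h2⟩ := hT t ht
      have hco : (1:ℝ)/2 ≤ 1 - L * lam t / 2 := by
        have : L * lam t ≤ 1 := by
          rw [← le_div_iff₀' hL]; exact h2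
        linarith
      have := (hlam_pos t).le
      calc ε / 2 * lam t ≤ lam t * (1 - L * lam t / 2) * ε := by
            nlinarith [mul_nonneg (mul_nonneg this hε.le)
              (by linarith : (0:ℝ) ≤ 1 - L * lam t / 2 - 1/2)]
        _ ≤ lam t * (1 - L * lam t / 2) * a t := by
            apply mul_le_mul_of_nonneg_left h1; nlinarith
    -- telescoping
    have tele : ∀ N, ell (T + N) +
        ∑ i ∈ Finset.range N, (lam (T+i) * (1 - L * lam (T+i) / 2) * a (T+i) - L * d (T+i))
        ≤ ell T := by
      intro N
      induction N with
      | zero => simp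
      | succ n ih =>
        rw [Finset.sum_range_succ]
        have := hdesc (T + n)
        have h2 : T + (n+1) = (T + n) + 1 := by ring
        rw [h2]
        linarith
    -- bound on partial sums of lam from T
    have hdsum : ∀ N, ∑ i ∈ Finset.range N, d (T+i) ≤ D := by
      intro N
      calc ∑ i ∈ Finset.range N, d (T+i)
          = ∑ t ∈ Finset.Ico T (T+N), d t := by
            rw [Finset.sum_Ico_eq_sum_range]; simp
        _ ≤ ∑ t ∈ Finset.range (T+N), d t := by
            rw [Finset.range_eq_Ico]
            exact Finset.sum_le_sum_of_subset_of_nonneg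
              (Finset.Ico_subset_Ico (Nat.zero_le _) le_rfl) (fun i _ _ => hd i)
        _ ≤ D := hD _
    have hbound : ∀ N, ∑ i ∈ Finset.range N, lam (T+i) ≤ 2 / ε * (ell T + L * D) := by
      intro N
      have h1 : ε / 2 * ∑ i ∈ Finset.range N, lam (T+i)
          ≤ ∑ i ∈ Finset.range N, lam (T+i) * (1 - L * lam (T+i) / 2) * a (T+i) := by
        rw [Finset.mul_sum]
        exact Finset.sum_le_sum fun i _ => hc (T+i) (Nat.le_add_right _ _)
      have h2 := tele N
      rw [Finset.sum_sub_distrib] at h2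
      have h3 : ∑ i ∈ Finset.range N, L * d (T+i) ≤ L * D := by
        rw [← Finset.mul_sum]
        exact mul_le_mul_of_nonneg_left (hdsum N) hL.le
      have h4 : ε / 2 * ∑ i ∈ Finset.range N, lam (T+i) ≤ ell T + L * D := by
        have := hell (T + N); linarith
      rw [div_mul_eq_mul_div, le_div_iff₀ hε]
      nlinarith [h4]
    -- contradiction with hRM1
    have hfull : ∀ N, ∑ t ∈ Finset.range (T+N), lam t
        ≤ ∑ t ∈ Finset.range T, lam t + 2 / ε * (ell T + L * D) := by
      intro N
      rw [Finset.sum_range_add]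
      exact add_le_add_right (hbound N) _
    obtain ⟨M, hM⟩ := (hRM1.eventually_gt_atTop
      (∑ t ∈ Finset.range T, lam t + 2 / ε * (ell T + L * D))).exists_forall_of_atTop
    have h5 := hfull M
    have h6 := hM (T + M) (Nat.le_add_left _ _)
    linarith
  -- conclude
  have hbdd : Filter.IsBoundedUnder (· ≥ ·) Filter.atTop a :=
    Filter.isBoundedUnder_of ⟨0, fun t => ha t⟩
  have hle : Filter.liminf a Filter.atTop ≤ 0 := by
    apply le_of_forall_pos_le_add
    intro ε hε
    rw [zero_add]
    exact Filter.liminf_le_of_frequently_le ((key ε hε).mono fun t h => h.le) hbdd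
  have hge : 0 ≤ Filter.liminf a Filter.atTop := by
    apply Filter.le_liminf_of_le
    · exact Filter.IsCoboundedUnder.of_frequently_le ((key 1 one_pos).mono fun t h => h.le)
    · exact Filter.Eventually.of_forall ha
  linarith
end

section
/- (Step 1 of the local error bound in Theorem 3.) Let f : ℝ^{n×n} → ℝ^{n×n} be Lipschitz with constant L and bounded by B (Frobenius norm), and let W : [t₀, t₁] → ℝ^{n×n} solve W′(t) = f(W(t)) with W(t₀) = W₀ = U₀S₀V₀ᵀ, where U₀, V₀ ∈ ℝ^{n×r} have orthonormal columns and S₀ ∈ ℝ^{r×r}; set λ := t₁ − t₀ ≥ 0. Let Û ∈ ℝ^{n×m} have orthonormal columns and satisfy (I − ÛÛᵀ)U₀ = 0 and (I − ÛÛᵀ) f(W₀) V₀ = 0 (the augmented basis contains the range of U₀ and of f(W₀)V₀). Assume the tangent-defect bound ‖f(W₀) − P(U₀,V₀) f(W₀)‖ ≤ ε. Then ‖(I − ÛÛᵀ) W(t₁)‖ ≤ λ ε + (L·B/2) λ². -/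
open Matrix

attribute [local instance] Matrix.frobeniusNormedAddCommGroup Matrix.frobeniusNormedSpace

lemma frob_norm_sqrt {p q : Type*} [Fintype p] [Fintype q] (A : Matrix p q ℝ) :
    ‖A‖ = Real.sqrt (∑ i, ∑ j, (A i j) ^ 2) := by
  rw [Matrix.frobenius_norm_def, Real.sqrt_eq_rpow]
  congr 1
  refine Finset.sum_congr rfl fun i _ => Finset.sum_congr rfl fun j _ => ?_
  rw [Real.norm_eq_abs, show (2:ℝ) = ((2:ℕ):ℝ) by norm_num, Real.rpow_natCast]; exact sq_abs _

lemma proj_contract {N : ℕ} (Q : Matrix (Fin N) (Fin N) ℝ) (hsymm : Qᵀ = Q)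
    (hidem : Q * Q = Q) (X : Matrix (Fin N) (Fin N) ℝ) : ‖Q * X‖ ≤ ‖X‖ := by
  set Y := Q * X with hY
  have hYtY : Yᵀ * Y = Xᵀ * Y := by
    rw [hY, Matrix.transpose_mul, hsymm, Matrix.mul_assoc, ← Matrix.mul_assoc Q Q X, hidem]
  have key : ∑ p : Fin N × Fin N, (Y p.1 p.2) ^ 2 = ∑ p : Fin N × Fin N, X p.1 p.2 * Y p.1 p.2 := by
    have h1 : (Yᵀ * Y).trace = (Xᵀ * Y).trace := by rw [hYtY]
    rw [Matrix.trace, Matrix.trace] at h1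
    simp only [Matrix.diag_apply, Matrix.mul_apply, Matrix.transpose_apply] at h1
    rw [Fintype.sum_prod_type, Fintype.sum_prod_type]
    calc ∑ i, ∑ j, (Y i j) ^ 2 = ∑ j, ∑ i, Y i j * Y i j := by
          rw [Finset.sum_comm]; simp [sq]
      _ = ∑ j, ∑ i, X i j * Y i j := h1
      _ = ∑ i, ∑ j, X i j * Y i j := by rw [Finset.sum_comm]
  have cs := Finset.sum_mul_sq_le_sq_mul_sq Finset.univ
      (fun p : Fin N × Fin N => X p.1 p.2) (fun p => Y p.1 p.2)
  set a := ∑ p : Fin N × Fin N, (X p.1 p.2) ^ 2 with ha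
  set b := ∑ p : Fin N × Fin N, (Y p.1 p.2) ^ 2 with hb
  have hbnn : 0 ≤ b := Finset.sum_nonneg fun p _ => sq_nonneg _
  have hann : 0 ≤ a := Finset.sum_nonneg fun p _ => sq_nonneg _
  have hba : b ≤ a := by
    rcases eq_or_lt_of_le hbnn with h0 | hpos
    · linarith
    · have : b ^ 2 ≤ a * b := by rw [sq]; calc b * b = (∑ p : Fin N × Fin N, X p.1 p.2 * Y p.1 p.2) * b := by rw [← key]
          _ ≤ a * b := by nlinarith [cs, key]
      nlinarith
  have hnY : ‖Y‖ = Real.sqrt b := by rw [frob_norm_sqrt, hb, Fintype.sum_prod_type]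
  have hnX : ‖X‖ = Real.sqrt a := by rw [frob_norm_sqrt, ha, Fintype.sum_prod_type]
  rw [hnY, hnX]
  exact Real.sqrt_le_sqrt hba

/-- Step 1 of the local error bound in Theorem 3: for the flow `Ẇ = f(W)` with
`f` `K`-Lipschitz and bounded by `B`, `W(t₀) = U₀S₀V₀ᵀ`, an augmented orthonormal basis `Û`
containing the ranges of `U₀` and `f(W₀)V₀`, and the tangent-defect bound
`‖f(W₀) − P(U₀,V₀)f(W₀)‖ ≤ ε`, one has
`‖(I − ÛÛᵀ)W(t₁)‖ ≤ λε + (K·B/2)λ²` with `λ = t₁ − t₀`. -/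
theorem local_error_basis_step (n r m : ℕ)
    (f : Matrix (Fin n) (Fin n) ℝ → Matrix (Fin n) (Fin n) ℝ)
    (K : NNReal) (hf : LipschitzWith K f)
    (B : ℝ) (hB : ∀ Z : Matrix (Fin n) (Fin n) ℝ, ‖f Z‖ ≤ B)
    (t₀ t₁ : ℝ) (ht : t₀ ≤ t₁)
    (W : ℝ → Matrix (Fin n) (Fin n) ℝ)
    (hW : ∀ t ∈ Set.Icc t₀ t₁, HasDerivAt W (f (W t)) t)
    (U₀ V₀ : Matrix (Fin n) (Fin r) ℝ) (S₀ : Matrix (Fin r) (Fin r) ℝ)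
    (hU₀ : U₀ᵀ * U₀ = 1) (hV₀ : V₀ᵀ * V₀ = 1)
    (hW₀ : W t₀ = U₀ * S₀ * V₀ᵀ)
    (Uh : Matrix (Fin n) (Fin m) ℝ) (hUh : Uhᵀ * Uh = 1)
    (hcapture₁ : (1 - Uh * Uhᵀ) * U₀ = 0)
    (hcapture₂ : (1 - Uh * Uhᵀ) * (f (W t₀) * V₀) = 0)
    (ε : ℝ) (hdefect : ‖f (W t₀) - tanProj U₀ V₀ (f (W t₀))‖ ≤ ε) :
    ‖(1 - Uh * Uhᵀ) * W t₁‖ ≤ (t₁ - t₀) * ε + (K : ℝ) * B / 2 * (t₁ - t₀) ^ 2 := by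
  set Q : Matrix (Fin n) (Fin n) ℝ := 1 - Uh * Uhᵀ with hQdef
  have hsymm : Qᵀ = Q := by
    simp [hQdef, Matrix.transpose_sub, Matrix.transpose_mul]
  have hidem : Q * Q = Q := by
    simp only [hQdef, Matrix.sub_mul, Matrix.mul_sub, Matrix.one_mul, Matrix.mul_one]
    rw [Matrix.mul_assoc Uh Uhᵀ (Uh * Uhᵀ), ← Matrix.mul_assoc Uhᵀ Uh Uhᵀ, hUh, Matrix.one_mul]
    abel
  have hcontr : ∀ X : Matrix (Fin n) (Fin n) ℝ, ‖Q * X‖ ≤ ‖X‖ :=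
    proj_contract Q hsymm hidem
  have hB0 : 0 ≤ B := le_trans (norm_nonneg _) (hB 0)
  -- Lipschitz increments of W
  have hWlip : ∀ t ∈ Set.Icc t₀ t₁, ‖W t - W t₀‖ ≤ B * (t - t₀) :=
    norm_image_sub_le_of_norm_deriv_le_segment'
      (fun x hx => (hW x hx).hasDerivWithinAt)
      (fun x hx => hB (W x))
  -- the constant part Q f(W t₀) is bounded by ε
  have hQtan : Q * tanProj U₀ V₀ (f (W t₀)) = 0 := by
    unfold tanProj
    have h1 : Q * (U₀ * U₀ᵀ * f (W t₀)) = 0 := by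
      rw [show U₀ * U₀ᵀ * f (W t₀) = U₀ * (U₀ᵀ * f (W t₀)) from Matrix.mul_assoc _ _ _,
        ← Matrix.mul_assoc, hcapture₁, Matrix.zero_mul]
    have h2 : Q * (f (W t₀) * (V₀ * V₀ᵀ)) = 0 := by
      rw [show f (W t₀) * (V₀ * V₀ᵀ) = f (W t₀) * V₀ * V₀ᵀ from (Matrix.mul_assoc _ _ _).symm,
        ← Matrix.mul_assoc, hcapture₂, Matrix.zero_mul]
    have h3 : Q * (U₀ * U₀ᵀ * f (W t₀) * (V₀ * V₀ᵀ)) = 0 := by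
      rw [← Matrix.mul_assoc, h1, Matrix.zero_mul]
    rw [Matrix.mul_sub, Matrix.mul_add, h1, h2, h3]
    simp
  have hQf : ‖Q * f (W t₀)‖ ≤ ε := by
    have : Q * f (W t₀) = Q * (f (W t₀) - tanProj U₀ V₀ (f (W t₀))) := by
      rw [Matrix.mul_sub, hQtan, sub_zero]
    rw [this]
    exact le_trans (hcontr _) hdefect
  -- derivative machinery
  set C : Matrix (Fin n) (Fin n) ℝ := Q * f (W t₀) with hC
  set L : Matrix (Fin n) (Fin n) ℝ →L[ℝ] Matrix (Fin n) (Fin n) ℝ :=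
    LinearMap.toContinuousLinearMap
      { toFun := fun X => Q * X
        map_add' := fun A B' => Matrix.mul_add _ _ _
        map_smul' := fun c A => by simp [Matrix.mul_smul] } with hL
  have hLapp : ∀ X, L X = Q * X := fun X => rfl
  set g : ℝ → Matrix (Fin n) (Fin n) ℝ := fun t => Q * W t - (t - t₀) • C with hg
  have hg' : ∀ t ∈ Set.Icc t₀ t₁, HasDerivAt g (Q * (f (W t) - f (W t₀))) t := by
    intro t htmem
    have h1 : HasDerivAt (fun s => Q * W s) (Q * f (W t)) t := by
      have := L.hasFDerivAt.comp_hasDerivAt t (hW t htmem)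
      exact this
    have h2 : HasDerivAt (fun s : ℝ => (s - t₀) • C) C t := by
      have h := ((hasDerivAt_id t).sub_const t₀).smul_const C
      rw [one_smul] at h
      exact h
    have := h1.sub h2
    rw [Matrix.mul_sub]
    exact this
  have hg0 : g t₀ = 0 := by
    rw [hg]
    simp only [sub_self, zero_smul, sub_zero, hW₀]
    rw [← Matrix.mul_assoc, ← Matrix.mul_assoc, hcapture₁]
    simp
  -- boundary comparison
  set Bd : ℝ → ℝ := fun t => (K : ℝ) * B / 2 * (t - t₀) ^ 2 with hBd
  have hBd' : ∀ t : ℝ, HasDerivAt Bd ((K : ℝ) * B * (t - t₀)) t := by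
    intro t
    have : HasDerivAt (fun s : ℝ => (s - t₀) ^ 2) (2 * (t - t₀)) t := by
      simpa using ((hasDerivAt_id' t).sub_const t₀).fun_pow 2
    have := this.const_mul ((K : ℝ) * B / 2)
    exact this.congr_deriv (by ring)
  have hbound : ∀ x ∈ Set.Ico t₀ t₁, ‖Q * (f (W x) - f (W t₀))‖ ≤ (K : ℝ) * B * (x - t₀) := by
    intro x hx
    have hxm : x ∈ Set.Icc t₀ t₁ := ⟨hx.1, le_of_lt hx.2⟩
    calc ‖Q * (f (W x) - f (W t₀))‖ ≤ ‖f (W x) - f (W t₀)‖ := hcontr _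
      _ ≤ (K : ℝ) * ‖W x - W t₀‖ := by
          have := hf.dist_le_mul (W x) (W t₀)
          rwa [dist_eq_norm, dist_eq_norm] at this
      _ ≤ (K : ℝ) * (B * (x - t₀)) := by
          exact mul_le_mul_of_nonneg_left (hWlip x hxm) K.2
      _ = (K : ℝ) * B * (x - t₀) := by ring
  have hgcont : ContinuousOn g (Set.Icc t₀ t₁) :=
    fun x hx => (hg' x hx).continuousAt.continuousWithinAt
  have hmain : ‖g t₁‖ ≤ Bd t₁ := by
    refine image_norm_le_of_norm_deriv_right_le_deriv_boundary hgcont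
      (fun x hx => ((hg' x ⟨hx.1, le_of_lt hx.2⟩).hasDerivWithinAt)) ?_ hBd' hbound
      (Set.right_mem_Icc.2 ht)
    simp [hg0, hBd]
  -- conclude
  have hsplit : Q * W t₁ = g t₁ + (t₁ - t₀) • C := by
    show Q * W t₁ = Q * W t₁ - (t₁ - t₀) • C + (t₁ - t₀) • C
    rw [sub_add_cancel]
  calc ‖Q * W t₁‖ ≤ ‖g t₁‖ + ‖(t₁ - t₀) • C‖ := by rw [hsplit]; exact norm_add_le _ _
    _ ≤ Bd t₁ + (t₁ - t₀) * ε := by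
        have h1 : ‖(t₁ - t₀) • C‖ = (t₁ - t₀) * ‖C‖ := by
          rw [norm_smul, Real.norm_eq_abs, abs_of_nonneg (by linarith)]
        rw [h1]
        have := mul_le_mul_of_nonneg_left hQf (show (0:ℝ) ≤ t₁ - t₀ by linarith)
        exact add_le_add hmain this
    _ = (t₁ - t₀) * ε + (K : ℝ) * B / 2 * (t₁ - t₀) ^ 2 := by rw [hBd]; ring
end

section
/- (Coefficient-block bound, Step 2 of the local error bound in Theorem 3.) Let f : ℝ^{n×n} → ℝ^{n×n} be Lipschitz with constant L and bounded by B (Frobenius norm), and let W : [t₀, t₁] → ℝ^{n×n} solve W′(t) = f(W(t)) with W(t₀) = W₀ = U₀S₀V₀ᵀ, where U₀, V₀ ∈ ℝ^{n×r} have orthonormal columns and S₀ ∈ ℝ^{r×r}; set λ := t₁ − t₀ ≥ 0 and S_new := S₀ + λ U₀ᵀ f(W₀) V₀. Then ‖U₀ᵀ W(t₁) V₀ − S_new‖ ≤ (L·B/2) λ². -/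
open Matrix

attribute [local instance] Matrix.frobeniusNormedAddCommGroup Matrix.frobeniusNormedSpace

section norms
variable {m k : Type*} [Fintype m] [Fintype k]

lemma frob_sq (A : Matrix m k ℝ) : ‖A‖ ^ 2 = ∑ i, ∑ j, (A i j) ^ 2 := by
  rw [Matrix.frobenius_norm_def]
  rw [← Real.rpow_natCast _ 2, ← Real.rpow_mul (by positivity)]
  norm_num

lemma frob_sq_eq_trace (A : Matrix m k ℝ) : ‖A‖ ^ 2 = (Aᵀ * A).trace := by
  rw [frob_sq, Matrix.trace]
  simp only [Matrix.diag, Matrix.mul_apply, Matrix.transpose_apply, sq]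
  rw [Finset.sum_comm]

lemma norm_mulLeft_le {r n : ℕ} (U : Matrix (Fin n) (Fin r) ℝ)
    (hU : Uᵀ * U = 1) (M : Matrix (Fin n) m ℝ) : ‖Uᵀ * M‖ ≤ ‖M‖ := by
  have hU' : ∀ (X : Matrix (Fin r) m ℝ), Uᵀ * (U * X) = X := fun X => by
    rw [← Matrix.mul_assoc, hU, Matrix.one_mul]
  have key : ‖Uᵀ * M‖ ^ 2 + ‖M - U * Uᵀ * M‖ ^ 2 = ‖M‖ ^ 2 := by
    rw [frob_sq_eq_trace, frob_sq_eq_trace, frob_sq_eq_trace]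
    simp only [Matrix.transpose_sub, Matrix.transpose_mul, Matrix.transpose_transpose,
      Matrix.sub_mul, Matrix.mul_sub, Matrix.trace_sub, Matrix.mul_assoc, hU']
    ring
  have h5 : ‖Uᵀ * M‖ ^ 2 ≤ ‖M‖ ^ 2 := by nlinarith [sq_nonneg ‖M - U * Uᵀ * M‖]
  nlinarith [norm_nonneg (Uᵀ * M), norm_nonneg M]

lemma norm_compress_le {r n : ℕ} (U V : Matrix (Fin n) (Fin r) ℝ)
    (hU : Uᵀ * U = 1) (hV : Vᵀ * V = 1) (M : Matrix (Fin n) (Fin n) ℝ) :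
    ‖Uᵀ * M * V‖ ≤ ‖M‖ := by
  calc ‖Uᵀ * M * V‖ = ‖(Uᵀ * M * V)ᵀ‖ := (Matrix.frobenius_norm_transpose _).symm
    _ = ‖Vᵀ * (Uᵀ * M)ᵀ‖ := by rw [Matrix.transpose_mul]
    _ ≤ ‖(Uᵀ * M)ᵀ‖ := norm_mulLeft_le V hV _
    _ = ‖Uᵀ * M‖ := Matrix.frobenius_norm_transpose _
    _ ≤ ‖M‖ := norm_mulLeft_le U hU M
end norms

/-- coefficient-block bound, Step 2 of the local error bound in Theorem 3: for
the flow `Ẇ = f(W)` with `f` `K`-Lipschitz and bounded by `B`, `W(t₀) = U₀S₀V₀ᵀ` with `U₀, V₀`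
orthonormal, and `S_new = S₀ + λ U₀ᵀ f(W₀) V₀` with `λ = t₁ − t₀`, one has
`‖U₀ᵀ W(t₁) V₀ − S_new‖ ≤ (K·B/2)λ²`. -/
theorem local_error_coefficient_block (n r : ℕ)
    (f : Matrix (Fin n) (Fin n) ℝ → Matrix (Fin n) (Fin n) ℝ)
    (K : NNReal) (hf : LipschitzWith K f)
    (B : ℝ) (hB : ∀ Z : Matrix (Fin n) (Fin n) ℝ, ‖f Z‖ ≤ B)
    (t₀ t₁ : ℝ) (ht : t₀ ≤ t₁)
    (W : ℝ → Matrix (Fin n) (Fin n) ℝ)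
    (hW : ∀ t ∈ Set.Icc t₀ t₁, HasDerivAt W (f (W t)) t)
    (U₀ V₀ : Matrix (Fin n) (Fin r) ℝ) (S₀ : Matrix (Fin r) (Fin r) ℝ)
    (hU₀ : U₀ᵀ * U₀ = 1) (hV₀ : V₀ᵀ * V₀ = 1)
    (hW₀ : W t₀ = U₀ * S₀ * V₀ᵀ) :
    ‖U₀ᵀ * W t₁ * V₀ - (S₀ + (t₁ - t₀) • (U₀ᵀ * f (W t₀) * V₀))‖
      ≤ (K : ℝ) * B / 2 * (t₁ - t₀) ^ 2 := by
  have hK0 : (0:ℝ) ≤ K := K.coe_nonneg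
  have hB0 : (0:ℝ) ≤ B := le_trans (norm_nonneg _) (hB 0)
  have hWc : ContinuousOn W (Set.Icc t₀ t₁) :=
    fun t htm => (hW t htm).continuousAt.continuousWithinAt
  have hfWc : ContinuousOn (fun t => f (W t)) (Set.Icc t₀ t₁) :=
    hf.continuous.comp_continuousOn hWc
  -- Step 1: ‖W t - W t₀‖ ≤ B * (t - t₀)
  have step1 : ∀ t ∈ Set.Icc t₀ t₁, ‖W t - W t₀‖ ≤ B * (t - t₀) := by
    intro t htm
    have hsub : Set.uIcc t₀ t ⊆ Set.Icc t₀ t₁ := by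
      rw [Set.uIcc_of_le htm.1]
      exact Set.Icc_subset_Icc le_rfl htm.2
    have hint := (hfWc.mono hsub).intervalIntegrable (μ := MeasureTheory.volume)
    have heq := intervalIntegral.integral_eq_sub_of_hasDerivAt
      (fun s hs => hW s (hsub hs)) hint
    calc ‖W t - W t₀‖ = ‖∫ s in t₀..t, f (W s)‖ := by rw [heq]
      _ ≤ B * |t - t₀| :=
        intervalIntegral.norm_integral_le_of_norm_le_const (fun s _ => hB (W s))
      _ = B * (t - t₀) := by rw [abs_of_nonneg (by linarith [htm.1])]
  -- the compression CLM
  set c : Matrix (Fin r) (Fin r) ℝ := U₀ᵀ * f (W t₀) * V₀ with hc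
  let L : Matrix (Fin n) (Fin n) ℝ →L[ℝ] Matrix (Fin r) (Fin r) ℝ :=
    LinearMap.toContinuousLinearMap
      { toFun := fun X => U₀ᵀ * X * V₀
        map_add' := fun A B => by simp [Matrix.mul_add, Matrix.add_mul]
        map_smul' := fun t A => by simp [Matrix.mul_smul, Matrix.smul_mul] }
  have hLapp : ∀ X, L X = U₀ᵀ * X * V₀ := fun X => rfl
  have hh : ∀ t ∈ Set.Icc t₀ t₁,
      HasDerivAt (fun s => U₀ᵀ * W s * V₀ - (s - t₀) • c)
        (U₀ᵀ * f (W t) * V₀ - c) t := by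
    intro t htm
    have h1 : HasDerivAt (fun s => U₀ᵀ * W s * V₀) (U₀ᵀ * f (W t) * V₀) t := by
      have := L.hasFDerivAt.comp_hasDerivAt t (hW t htm)
      exact this
    have h2 : HasDerivAt (fun s : ℝ => (s - t₀) • c) c t := by
      have := ((hasDerivAt_id t).sub_const t₀).smul_const c
      rw [one_smul] at this
      exact this
    exact h1.sub h2
  have hgc : ContinuousOn (fun t => U₀ᵀ * f (W t) * V₀ - c) (Set.Icc t₀ t₁) := by
    apply ContinuousOn.sub _ continuousOn_const
    exact (L.continuous.comp_continuousOn hfWc)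
  have hint2 := ContinuousOn.intervalIntegrable (μ := MeasureTheory.volume)
      (u := fun t => U₀ᵀ * f (W t) * V₀ - c) (a := t₀) (b := t₁) (by
    rwa [Set.uIcc_of_le ht])
  have heq2 := intervalIntegral.integral_eq_sub_of_hasDerivAt
    (f := fun s => U₀ᵀ * W s * V₀ - (s - t₀) • c)
    (fun s hs => hh s (by rwa [Set.uIcc_of_le ht] at hs)) hint2
  have hS₀ : U₀ᵀ * W t₀ * V₀ = S₀ := by
    rw [hW₀, ← Matrix.mul_assoc, ← Matrix.mul_assoc, hU₀, Matrix.one_mul, Matrix.mul_assoc,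
      hV₀, Matrix.mul_one]
  have htarget : U₀ᵀ * W t₁ * V₀ - (S₀ + (t₁ - t₀) • c)
      = ∫ t in t₀..t₁, (U₀ᵀ * f (W t) * V₀ - c) := by
    rw [heq2]
    simp only [hS₀, sub_self, zero_smul, sub_zero]
    abel
  rw [htarget]
  -- bound the integral
  have hbound : ∀ᵐ t ∂(MeasureTheory.volume.restrict (Set.uIoc t₀ t₁)),
      ‖U₀ᵀ * f (W t) * V₀ - c‖ ≤ (K : ℝ) * B * (t - t₀) := by
    refine MeasureTheory.ae_restrict_of_forall_mem measurableSet_uIoc ?_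
    intro t htm
    rw [Set.uIoc_of_le ht] at htm
    have htm' : t ∈ Set.Icc t₀ t₁ := ⟨le_of_lt htm.1, htm.2⟩
    have h1 : U₀ᵀ * f (W t) * V₀ - c = U₀ᵀ * (f (W t) - f (W t₀)) * V₀ := by
      rw [hc, Matrix.mul_sub, Matrix.sub_mul]
    rw [h1]
    calc ‖U₀ᵀ * (f (W t) - f (W t₀)) * V₀‖ ≤ ‖f (W t) - f (W t₀)‖ :=
          norm_compress_le U₀ V₀ hU₀ hV₀ _
      _ ≤ (K : ℝ) * ‖W t - W t₀‖ := by
          have := hf.dist_le_mul (W t) (W t₀)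
          rwa [dist_eq_norm, dist_eq_norm] at this
      _ ≤ (K : ℝ) * (B * (t - t₀)) :=
          mul_le_mul_of_nonneg_left (step1 t htm') hK0
      _ = (K : ℝ) * B * (t - t₀) := by ring
  have hgint : IntervalIntegrable (fun t => (K : ℝ) * B * (t - t₀))
      MeasureTheory.volume t₀ t₁ := by
    exact ((continuous_const.mul (continuous_id.sub continuous_const))).intervalIntegrable _ _
  have hval : (∫ t in t₀..t₁, (K : ℝ) * B * (t - t₀)) = (K : ℝ) * B / 2 * (t₁ - t₀) ^ 2 := by
    rw [intervalIntegral.integral_const_mul]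
    have : (∫ t in t₀..t₁, (t - t₀)) = ((t₁ - t₀) ^ 2) / 2 := by
      rw [intervalIntegral.integral_comp_sub_right (fun x => x) t₀]
      simp [integral_id]
    rw [this]; ring
  calc ‖∫ t in t₀..t₁, (U₀ᵀ * f (W t) * V₀ - c)‖
      ≤ |∫ t in t₀..t₁, (K : ℝ) * B * (t - t₀)| :=
        intervalIntegral.norm_integral_le_abs_of_norm_le hbound hgint
    _ = (K : ℝ) * B / 2 * (t₁ - t₀) ^ 2 := by
        rw [hval, abs_of_nonneg (by positivity)]
end

section
/- (K-block bound, Step 2 of the local error bound in Theorem 3.) Let f : ℝ^{n×n} → ℝ^{n×n} be Lipschitz with constant L and bounded by B (Frobenius norm), and let W : [t₀, t₁] → ℝ^{n×n} solve W′(t) = f(W(t)) with W(t₀) = W₀ = U₀S₀V₀ᵀ, where U₀, V₀ ∈ ℝ^{n×r} have orthonormal columns and S₀ ∈ ℝ^{r×r}; set λ := t₁ − t₀ ≥ 0 and K_new := U₀S₀ + λ f(W₀) V₀. Then for every Ũ ∈ ℝ^{n×r'} with orthonormal columns, ‖Ũᵀ W(t₁) V₀ − Ũᵀ K_new‖ ≤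 (L·B/2) λ². -/
open Matrix intervalIntegral

attribute [local instance] Matrix.frobeniusNormedAddCommGroup Matrix.frobeniusNormedSpace

lemma frob_sq_s13 {m k : Type*} [Fintype m] [Fintype k] (A : Matrix m k ℝ) :
    ‖A‖ ^ 2 = (Aᵀ * A).trace := by
  have h1 : ∀ (i : m) (j : k), ‖A i j‖ ^ (2:ℝ) = (A i j)^2 := by
    intro i j
    rw [show (2:ℝ) = ((2:ℕ):ℝ) by norm_num, Real.rpow_natCast, Real.norm_eq_abs, sq_abs]
  rw [Matrix.frobenius_norm_def]
  simp_rw [h1]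
  rw [← Real.rpow_natCast _ 2, ← Real.rpow_mul (by positivity)]
  norm_num
  simp [Matrix.trace, Matrix.mul_apply, Matrix.diag, sq]
  exact Finset.sum_comm

lemma mul_orth_left {k : Type*} [Fintype k] {n r' : ℕ}
    (U : Matrix (Fin n) (Fin r') ℝ) (hU : Uᵀ * U = 1)
    (A : Matrix (Fin n) k ℝ) : ‖Uᵀ * A‖ ≤ ‖A‖ := by
  set P := U * Uᵀ with hPdef
  have hPP : P * P = P := by
    rw [hPdef]; rw [Matrix.mul_assoc, ← Matrix.mul_assoc Uᵀ, hU, Matrix.one_mul]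
  have hPt : Pᵀ = P := by rw [hPdef, Matrix.transpose_mul, Matrix.transpose_transpose]
  have h1 : ‖Uᵀ * A‖ ^ 2 = (Aᵀ * P * A).trace := by
    rw [frob_sq_s13, Matrix.transpose_mul, Matrix.transpose_transpose, hPdef]
    simp only [Matrix.mul_assoc]
  have hfix : (1 - P) * ((1 - P) * A) = (1 - P) * A := by
    rw [← Matrix.mul_assoc]
    congr 1
    simp only [Matrix.sub_mul, Matrix.mul_sub, Matrix.one_mul, Matrix.mul_one, hPP]
    abel
  have key : ((1 - P) * A)ᵀ * ((1 - P) * A) = Aᵀ * A - Aᵀ * P * A := by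
    rw [Matrix.transpose_mul, Matrix.transpose_sub, Matrix.transpose_one, hPt,
      Matrix.mul_assoc, hfix]
    simp [Matrix.mul_sub, Matrix.sub_mul, Matrix.mul_assoc]
  have h2 : ‖A‖ ^ 2 - ‖Uᵀ * A‖ ^ 2 = ‖(1 - P) * A‖ ^ 2 := by
    rw [h1, frob_sq_s13, frob_sq_s13, key, Matrix.trace_sub]
  have h3 : ‖Uᵀ * A‖ ^ 2 ≤ ‖A‖ ^ 2 := by nlinarith [sq_nonneg ‖(1 - P) * A‖]
  nlinarith [norm_nonneg (Uᵀ * A), norm_nonneg A]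

lemma mul_orth_right {k : Type*} [Fintype k] {n r : ℕ}
    (V : Matrix (Fin n) (Fin r) ℝ) (hV : Vᵀ * V = 1)
    (A : Matrix k (Fin n) ℝ) : ‖A * V‖ ≤ ‖A‖ := by
  rw [← Matrix.frobenius_norm_transpose (A * V), Matrix.transpose_mul,
    ← Matrix.frobenius_norm_transpose A]
  exact mul_orth_left V hV Aᵀ

lemma taylor_bound_aux (n : ℕ)
    (f : Matrix (Fin n) (Fin n) ℝ → Matrix (Fin n) (Fin n) ℝ)
    (K : NNReal) (hf : LipschitzWith K f)
    (B : ℝ) (hB : ∀ Z : Matrix (Fin n) (Fin n) ℝ, ‖f Z‖ ≤ B)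
    (t₀ t₁ : ℝ) (ht : t₀ ≤ t₁)
    (W : ℝ → Matrix (Fin n) (Fin n) ℝ)
    (hW : ∀ t ∈ Set.Icc t₀ t₁, HasDerivAt W (f (W t)) t) :
    ‖W t₁ - W t₀ - (t₁ - t₀) • f (W t₀)‖ ≤ (K : ℝ) * B / 2 * (t₁ - t₀) ^ 2 := by
  have hWc : ContinuousOn W (Set.Icc t₀ t₁) := fun t htI =>
    (hW t htI).continuousAt.continuousWithinAt
  have hfc : ContinuousOn (fun s => f (W s)) (Set.Icc t₀ t₁) :=
    hf.continuous.comp_continuousOn hWc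
  have hInt : @IntervalIntegrable _ _ NormedAddCommGroup.toENormedAddCommMonoid.toENormedAddMonoid
      (fun s => f (W s)) MeasureTheory.volume t₀ t₁ := by
    apply ContinuousOn.intervalIntegrable; rwa [Set.uIcc_of_le ht]
  have hFTC : ∀ s ∈ Set.Icc t₀ t₁, ∫ u in t₀..s, f (W u) = W s - W t₀ := by
    intro s hs
    apply intervalIntegral.integral_eq_sub_of_hasDerivAt
    · intro u hu
      rw [Set.uIcc_of_le hs.1] at hu
      exact hW u ⟨hu.1, le_trans hu.2 hs.2⟩
    · apply hInt.mono_set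
      rw [Set.uIcc_of_le hs.1, Set.uIcc_of_le ht]
      exact Set.Icc_subset_Icc le_rfl hs.2
  have hgrow : ∀ s ∈ Set.Icc t₀ t₁, ‖W s - W t₀‖ ≤ B * (s - t₀) := by
    intro s hs
    rw [← hFTC s hs]
    have h := intervalIntegral.norm_integral_le_of_norm_le_const
      (C := B) (f := fun u => f (W u)) (a := t₀) (b := s) (fun u _ => hB (W u))
    rwa [abs_of_nonneg (sub_nonneg.2 hs.1)] at h
  have hlam : (∫ _ in t₀..t₁, f (W t₀)) = (t₁ - t₀) • f (W t₀) :=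
    intervalIntegral.integral_const _
  have hmain : W t₁ - W t₀ - (t₁ - t₀) • f (W t₀)
      = ∫ u in t₀..t₁, (f (W u) - f (W t₀)) := by
    rw [intervalIntegral.integral_sub hInt (intervalIntegrable_const),
      hFTC t₁ ⟨ht, le_rfl⟩, hlam]
  have hptwise : ∀ u ∈ Set.uIoc t₀ t₁, ‖f (W u) - f (W t₀)‖ ≤ (K : ℝ) * B * (u - t₀) := by
    intro u hu
    rw [Set.uIoc_of_le ht] at hu
    have h1 : ‖f (W u) - f (W t₀)‖ ≤ (K : ℝ) * ‖W u - W t₀‖ := by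
      have := hf.dist_le_mul (W u) (W t₀)
      rwa [dist_eq_norm, dist_eq_norm] at this
    have h2 : ‖W u - W t₀‖ ≤ B * (u - t₀) := hgrow u ⟨hu.1.le, hu.2⟩
    calc ‖f (W u) - f (W t₀)‖ ≤ (K : ℝ) * ‖W u - W t₀‖ := h1
      _ ≤ (K : ℝ) * (B * (u - t₀)) := by
          apply mul_le_mul_of_nonneg_left h2 K.coe_nonneg
      _ = (K : ℝ) * B * (u - t₀) := by ring
  have hgInt : IntervalIntegrable (fun u => (K : ℝ) * B * (u - t₀)) MeasureTheory.volume t₀ t₁ :=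
    (Continuous.intervalIntegrable (by continuity) _ _)
  have hgval : (∫ u in t₀..t₁, (K : ℝ) * B * (u - t₀))
      = (K : ℝ) * B / 2 * (t₁ - t₀) ^ 2 := by
    simp_rw [show ∀ u : ℝ, (K : ℝ) * B * (u - t₀) = (K : ℝ) * B * u - (K : ℝ) * B * t₀ from
      fun u => by ring]
    rw [intervalIntegral.integral_sub ((intervalIntegrable_id).const_mul _)
      (intervalIntegrable_const), intervalIntegral.integral_const_mul, integral_id,
      intervalIntegral.integral_const]
    simp only [smul_eq_mul]
    ring
  rw [hmain]
  calc ‖∫ u in t₀..t₁, (f (W u) - f (W t₀))‖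
      ≤ |∫ u in t₀..t₁, (K : ℝ) * B * (u - t₀)| :=
        intervalIntegral.norm_integral_le_abs_of_norm_le
          (MeasureTheory.ae_restrict_of_forall_mem measurableSet_uIoc hptwise) hgInt
    _ = (K : ℝ) * B / 2 * (t₁ - t₀) ^ 2 := by
        have hB0 : 0 ≤ B := le_trans (norm_nonneg (f 0)) (hB 0)
        rw [hgval, abs_of_nonneg (by positivity)]

/-- K-block bound, Step 2 of the local error bound in Theorem 3: for the flow
`Ẇ = f(W)` with `f` `K`-Lipschitz and bounded by `B`, `W(t₀) = U₀S₀V₀ᵀ` with `U₀, V₀`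
orthonormal, and `K_new = U₀S₀ + λ f(W₀) V₀` with `λ = t₁ − t₀`, one has for every `Ũ` with
orthonormal columns `‖Ũᵀ W(t₁) V₀ − Ũᵀ K_new‖ ≤ (K·B/2)λ²`. -/
theorem local_error_K_block (n r r' : ℕ)
    (f : Matrix (Fin n) (Fin n) ℝ → Matrix (Fin n) (Fin n) ℝ)
    (K : NNReal) (hf : LipschitzWith K f)
    (B : ℝ) (hB : ∀ Z : Matrix (Fin n) (Fin n) ℝ, ‖f Z‖ ≤ B)
    (t₀ t₁ : ℝ) (ht : t₀ ≤ t₁)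
    (W : ℝ → Matrix (Fin n) (Fin n) ℝ)
    (hW : ∀ t ∈ Set.Icc t₀ t₁, HasDerivAt W (f (W t)) t)
    (U₀ V₀ : Matrix (Fin n) (Fin r) ℝ) (S₀ : Matrix (Fin r) (Fin r) ℝ)
    (hU₀ : U₀ᵀ * U₀ = 1) (hV₀ : V₀ᵀ * V₀ = 1)
    (hW₀ : W t₀ = U₀ * S₀ * V₀ᵀ) :
    ∀ Ua : Matrix (Fin n) (Fin r') ℝ, Uaᵀ * Ua = 1 →
      ‖Uaᵀ * W t₁ * V₀ - Uaᵀ * (U₀ * S₀ + (t₁ - t₀) • (f (W t₀) * V₀))‖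
        ≤ (K : ℝ) * B / 2 * (t₁ - t₀) ^ 2 := by
  intro Ua hUa
  have hUS : W t₀ * V₀ = U₀ * S₀ := by
    rw [hW₀, Matrix.mul_assoc (U₀ * S₀), hV₀, Matrix.mul_one]
  have hrw : Uaᵀ * W t₁ * V₀ - Uaᵀ * (U₀ * S₀ + (t₁ - t₀) • (f (W t₀) * V₀))
      = Uaᵀ * ((W t₁ - W t₀ - (t₁ - t₀) • f (W t₀)) * V₀) := by
    rw [← hUS]
    simp only [Matrix.mul_add, Matrix.sub_mul, Matrix.mul_sub, Matrix.smul_mul,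
      Matrix.mul_smul, Matrix.mul_assoc]
    abel
  rw [hrw]
  calc ‖Uaᵀ * ((W t₁ - W t₀ - (t₁ - t₀) • f (W t₀)) * V₀)‖
      ≤ ‖(W t₁ - W t₀ - (t₁ - t₀) • f (W t₀)) * V₀‖ := mul_orth_left Ua hUa _
    _ ≤ ‖W t₁ - W t₀ - (t₁ - t₀) • f (W t₀)‖ := mul_orth_right V₀ hV₀ _
    _ ≤ (K : ℝ) * B / 2 * (t₁ - t₀) ^ 2 := taylor_bound_aux n f K hf B hB t₀ t₁ ht W hW
end
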